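/- arXiv:cs/0606016 — 4 statements merged into one kernel-verified Lean document; each statement's English description precedes it below -/
import Mathlib

section
/- Let β′ > 0 and define a sequence (α_m)_{m≥0} of nonnegative reals by α₀ = 1 and, for every m ≥ 0, α_{m+1} = β′ · Σ_{k=1}^{m+1} Σ ∏_{i=1}^k α_{m_i − 1}, where the inner sum ranges over all k-tuples (m₁, …, m_k) of positive integers with m₁ + ⋯ + m_k = m + 1 (i.e., over all compositions of m+1 into k parts). Then there exists a constant C > max(1, β′) such that α_m < C^m · m^{m−2} for every integer m ≥ 1. -/
/-- The moment bound (Lemma I.3 of the paper): the moments `α_m = E{λ^m}` of a generic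
eigenvalue of `S Sᵀ`, which satisfy `α_0 = 1` and the recursion
`α_{m+1} = β' Σ_{k=1}^{m+1} Σ_{m₁+⋯+m_k = m+1, mᵢ ≥ 1} ∏ᵢ α_{mᵢ−1}`,
admit a bound `α_m < C^m m^{m−2}` for some constant `C > max(1, β')`. -/
theorem stmt_2 (β' : ℝ) (hβ' : 0 < β') (α : ℕ → ℝ) (hnn : ∀ m, 0 ≤ α m)
    (h0 : α 0 = 1)
    (hrec : ∀ m : ℕ, α (m + 1) = β' * ∑ k ∈ Finset.Icc 1 (m + 1),
      ∑ t ∈ (Finset.Nat.antidiagonalTuple k (m + 1)).filter (fun t => ∀ i, 0 < t i),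
        ∏ i, α (t i - 1)) :
    ∃ C : ℝ, C > max 1 β' ∧
      ∀ m : ℕ, 1 ≤ m → α m < C ^ m * (m : ℝ) ^ ((m : ℝ) - 2) := by
  classical
  set E : ℝ := max 1 β' with hE
  have hE1 : (1 : ℝ) ≤ E := le_max_left _ _
  have hEβ : β' ≤ E := le_max_right _ _
  have hE0 : (0 : ℝ) ≤ E := le_trans zero_le_one hE1
  -- Key lemma: α n ≤ E^n (n+1)^n
  have key : ∀ n : ℕ, α n ≤ E ^ n * ((n : ℝ) + 1) ^ n := by
    intro n
    induction n using Nat.strong_induction_on with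
    | _ n ih =>
      match n with
      | 0 => simp [h0]
      | (m + 1) =>
        rw [hrec m]
        -- reindex sum over k ∈ Icc 1 (m+1) as j+1, j ∈ range (m+1)
        have hreidx : ∑ k ∈ Finset.Icc 1 (m + 1),
            ∑ t ∈ (Finset.Nat.antidiagonalTuple k (m + 1)).filter (fun t => ∀ i, 0 < t i),
              ∏ i, α (t i - 1)
            = ∑ j ∈ Finset.range (m + 1),
              ∑ t ∈ (Finset.Nat.antidiagonalTuple (j + 1) (m + 1)).filter
                  (fun t => ∀ i, 0 < t i),
                ∏ i, α (t i - 1) := by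
          rw [← Finset.Ico_add_one_right_eq_Icc, Finset.sum_Ico_eq_sum_range]
          norm_num
          apply Finset.sum_congr rfl
          intro x _
          rw [Nat.add_comm 1 x]
        rw [hreidx]
        -- bound each inner sum
        have hinner : ∀ j ∈ Finset.range (m + 1),
            (∑ t ∈ (Finset.Nat.antidiagonalTuple (j + 1) (m + 1)).filter
                (fun t => ∀ i, 0 < t i),
              ∏ i, α (t i - 1)) ≤ E ^ m * ((m : ℝ) + 2) ^ m := by
          intro j hj
          have hjm : j ≤ m := Nat.lt_succ_iff.mp (Finset.mem_range.mp hj)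
          set S := (Finset.Nat.antidiagonalTuple (j + 1) (m + 1)).filter
              (fun t => ∀ i, 0 < t i) with hS
          -- per-term bound
          have hterm : ∀ t ∈ S, (∏ i, α (t i - 1)) ≤ E ^ (m - j) * ((m : ℝ) + 1) ^ (m - j) := by
            intro t ht
            rw [hS, Finset.mem_filter, Finset.Nat.mem_antidiagonalTuple] at ht
            obtain ⟨hsum, hpos⟩ := ht
            have hle : ∀ i, t i ≤ m + 1 := by
              intro i
              rw [← hsum]
              exact Finset.single_le_sum (fun i _ => Nat.zero_le _) (Finset.mem_univ i)
            have hsub : ∑ i, (t i - 1) = m - j := by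
              have h1 : ∑ i, (t i - 1) + (j + 1) = m + 1 := by
                calc ∑ i, (t i - 1) + (j + 1)
                    = ∑ i : Fin (j + 1), ((t i - 1) + 1) := by
                      rw [Finset.sum_add_distrib, Finset.sum_const, Finset.card_univ,
                        Fintype.card_fin, smul_eq_mul, mul_one]
                  _ = ∑ i, t i := Finset.sum_congr rfl (fun i _ => by have := hpos i; omega)
                  _ = m + 1 := hsum
              omega
            calc ∏ i, α (t i - 1)
                ≤ ∏ i, (E ^ (t i - 1) * ((m : ℝ) + 1) ^ (t i - 1)) := by
                  apply Finset.prod_le_prod (fun i _ => hnn _)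
                  intro i _
                  have hlt : t i - 1 < m + 1 := by have := hle i; have := hpos i; omega
                  refine le_trans (ih (t i - 1) hlt) ?_
                  apply mul_le_mul_of_nonneg_left _ (pow_nonneg hE0 _)
                  apply pow_le_pow_left₀ (by positivity)
                  have h1 : (t i : ℝ) ≤ (m : ℝ) + 1 := by exact_mod_cast hle i
                  have h2 : ((t i - 1 : ℕ) : ℝ) + 1 = (t i : ℝ) := by
                    rw [Nat.cast_sub (hpos i)]; push_cast; ring
                  linarith
              _ = E ^ (m - j) * ((m : ℝ) + 1) ^ (m - j) := by
                  rw [Finset.prod_mul_distrib, Finset.prod_pow_eq_pow_sum,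
                    Finset.prod_pow_eq_pow_sum, hsub]
          -- cardinality bound via injection into Fin j → Fin (m+2)
          have hcard : S.card ≤ (m + 2) ^ j := by
            have hinj : S.card ≤ (Finset.univ : Finset (Fin j → Fin (m + 2))).card := by
              apply Finset.card_le_card_of_injOn
                (fun t => fun i : Fin j => (⟨min (t i.succ) (m + 1), by omega⟩ : Fin (m + 2)))
              · intro a _; exact Finset.mem_univ _
              · intro t ht t' ht' hf
                simp only [Finset.mem_coe, hS, Finset.mem_filter,
                  Finset.Nat.mem_antidiagonalTuple] at ht ht'
                obtain ⟨hsum, hpos⟩ := ht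
                obtain ⟨hsum', hpos'⟩ := ht'
                have hle : ∀ i, t i ≤ m + 1 := by
                  intro i
                  rw [← hsum]
                  exact Finset.single_le_sum (fun i _ => Nat.zero_le _) (Finset.mem_univ i)
                have hle' : ∀ i, t' i ≤ m + 1 := by
                  intro i
                  rw [← hsum']
                  exact Finset.single_le_sum (fun i _ => Nat.zero_le _) (Finset.mem_univ i)
                have htail : ∀ i : Fin j, t i.succ = t' i.succ := by
                  intro i
                  have hfi := congrFun hf i
                  simp only [Fin.mk.injEq] at hfi
                  have h1 := hle i.succ
                  have h2 := hle' i.succ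
                  omega
                funext i
                refine Fin.cases ?_ (fun i => htail i) i
                have e1 : t 0 + ∑ i : Fin j, t i.succ = m + 1 := by
                  rw [← Fin.sum_univ_succ]; exact hsum
                have e2 : t' 0 + ∑ i : Fin j, t' i.succ = m + 1 := by
                  rw [← Fin.sum_univ_succ]; exact hsum'
                have e3 : ∑ i : Fin j, t i.succ = ∑ i : Fin j, t' i.succ :=
                  Finset.sum_congr rfl (fun i _ => htail i)
                omega
            simpa [Fintype.card_fun] using hinj
          calc (∑ t ∈ S, ∏ i, α (t i - 1))
              ≤ S.card • (E ^ (m - j) * ((m : ℝ) + 1) ^ (m - j)) :=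
                Finset.sum_le_card_nsmul _ _ _ hterm
            _ ≤ ((m + 2) ^ j : ℕ) • (E ^ (m - j) * ((m : ℝ) + 1) ^ (m - j)) :=
                nsmul_le_nsmul_left (by positivity) hcard
            _ = ((m : ℝ) + 2) ^ j * (E ^ (m - j) * ((m : ℝ) + 1) ^ (m - j)) := by
                rw [nsmul_eq_mul]; push_cast; ring
            _ ≤ E ^ m * ((m : ℝ) + 2) ^ m := by
                have h1 : E ^ (m - j) ≤ E ^ m := pow_le_pow_right₀ hE1 (Nat.sub_le _ _)
                have h2 : ((m : ℝ) + 1) ^ (m - j) ≤ ((m : ℝ) + 2) ^ (m - j) :=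
                  pow_le_pow_left₀ (by positivity) (by linarith) _
                have h3 : ((m : ℝ) + 2) ^ j * ((m : ℝ) + 2) ^ (m - j) = ((m : ℝ) + 2) ^ m := by
                  rw [← pow_add]; congr 1; omega
                calc ((m : ℝ) + 2) ^ j * (E ^ (m - j) * ((m : ℝ) + 1) ^ (m - j))
                    ≤ ((m : ℝ) + 2) ^ j * (E ^ m * ((m : ℝ) + 2) ^ (m - j)) := by
                      apply mul_le_mul_of_nonneg_left _ (by positivity)
                      exact mul_le_mul h1 h2 (by positivity) (by positivity)
                  _ = E ^ m * (((m : ℝ) + 2) ^ j * ((m : ℝ) + 2) ^ (m - j)) := by ring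
                  _ = E ^ m * ((m : ℝ) + 2) ^ m := by rw [h3]
        have hsumle : ∑ j ∈ Finset.range (m + 1),
            (∑ t ∈ (Finset.Nat.antidiagonalTuple (j + 1) (m + 1)).filter
                (fun t => ∀ i, 0 < t i),
              ∏ i, α (t i - 1)) ≤ ((m : ℝ) + 1) * (E ^ m * ((m : ℝ) + 2) ^ m) := by
          calc _ ≤ (Finset.range (m + 1)).card • (E ^ m * ((m : ℝ) + 2) ^ m) :=
                Finset.sum_le_card_nsmul _ _ _ hinner
            _ = ((m : ℝ) + 1) * (E ^ m * ((m : ℝ) + 2) ^ m) := by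
                rw [Finset.card_range, nsmul_eq_mul]; push_cast; ring
        refine le_trans (mul_le_mul_of_nonneg_left hsumle hβ'.le) ?_
        have hfin : β' * (((m : ℝ) + 1) * (E ^ m * ((m : ℝ) + 2) ^ m))
            ≤ E ^ (m + 1) * ((m : ℝ) + 2) ^ (m + 1) := by
          have : β' * (((m : ℝ) + 1) * (E ^ m * ((m : ℝ) + 2) ^ m))
              ≤ E * (((m : ℝ) + 2) * (E ^ m * ((m : ℝ) + 2) ^ m)) := by
            apply mul_le_mul hEβ _ (by positivity) hE0
            apply mul_le_mul_of_nonneg_right (by linarith) (by positivity)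
          calc β' * (((m : ℝ) + 1) * (E ^ m * ((m : ℝ) + 2) ^ m))
              ≤ E * (((m : ℝ) + 2) * (E ^ m * ((m : ℝ) + 2) ^ m)) := this
            _ = E ^ (m + 1) * ((m : ℝ) + 2) ^ (m + 1) := by ring
        refine le_trans hfin (le_of_eq ?_)
        push_cast
        ring
  -- conclude
  refine ⟨8 * E + 1, ?_, ?_⟩
  · have : E ≤ 8 * E := by linarith
    calc max 1 β' = E := hE.symm
      _ < 8 * E + 1 := by linarith
  · intro m hm
    have hm0 : (0 : ℝ) < m := by exact_mod_cast hm
    have hrp : (0 : ℝ) < (m : ℝ) ^ ((m : ℝ) - 2) := Real.rpow_pos_of_pos hm0 _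
    have hsplit : (m : ℝ) ^ (m : ℕ) = (m : ℝ) ^ ((m : ℝ) - 2) * (m : ℝ) ^ 2 := by
      rw [show ((m : ℝ) ^ 2 = (m : ℝ) ^ ((2 : ℕ) : ℝ)) by rw [Real.rpow_natCast],
        ← Real.rpow_natCast (m : ℝ) m, ← Real.rpow_add hm0]
      norm_num
    have hm2 : (m : ℝ) ^ 2 ≤ 4 ^ m := by
      have h2 : (m : ℝ) ≤ 2 ^ m := by exact_mod_cast (Nat.lt_two_pow_self (n := m)).le
      have h3 : (m : ℝ) ^ 2 ≤ ((2 : ℝ) ^ m) ^ 2 := by nlinarith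
      calc (m : ℝ) ^ 2 ≤ ((2 : ℝ) ^ m) ^ 2 := h3
        _ = 4 ^ m := by rw [← pow_mul, mul_comm, pow_mul]; norm_num
    have h1 : α m ≤ (8 * E) ^ m * (m : ℝ) ^ ((m : ℝ) - 2) := by
      calc α m ≤ E ^ m * ((m : ℝ) + 1) ^ m := key m
        _ ≤ E ^ m * (2 * (m : ℝ)) ^ m := by
            apply mul_le_mul_of_nonneg_left _ (by positivity)
            apply pow_le_pow_left₀ (by positivity)
            have : (1 : ℝ) ≤ m := by exact_mod_cast hm
            linarith
        _ = (2 * E) ^ m * (m : ℝ) ^ (m : ℕ) := by rw [mul_pow, mul_pow]; ring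
        _ = (2 * E) ^ m * ((m : ℝ) ^ ((m : ℝ) - 2) * (m : ℝ) ^ 2) := by rw [hsplit]
        _ ≤ (2 * E) ^ m * ((m : ℝ) ^ ((m : ℝ) - 2) * 4 ^ m) := by
            apply mul_le_mul_of_nonneg_left _ (by positivity)
            exact mul_le_mul_of_nonneg_left hm2 (le_of_lt hrp)
        _ = (8 * E) ^ m * (m : ℝ) ^ ((m : ℝ) - 2) := by
            rw [mul_pow, mul_pow, show ((8 : ℝ) = 2 * 4) by norm_num, mul_pow]
            ring
    have h2 : (8 * E) ^ m < (8 * E + 1) ^ m :=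
      pow_lt_pow_left₀ (by linarith) (by positivity) (by omega)
    calc α m ≤ (8 * E) ^ m * (m : ℝ) ^ ((m : ℝ) - 2) := h1
      _ < (8 * E + 1) ^ m * (m : ℝ) ^ ((m : ℝ) - 2) := mul_lt_mul_of_pos_right h2 hrp
end

section
/- Let P_e ∈ [0,1], let b be a random variable uniformly distributed on {−1, +1}, let χ be a Bernoulli random variable with P(χ = 1) = P_e independent of b, and let δb = 2bχ. Let a ∈ ℂ be a constant and let X be a complex-valued square-integrable random variable independent of the pair (b, χ) with E[X] = 2P_e·a and E[|X|²] = Δ + 4P_e²·|a|² for some Δ ≥ 0. Then E[ |X·b + a·δb − X·δb|² ] = Δ + 4·P_e·(1 − P_e)·|a|². -/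
open MeasureTheory ProbabilityTheory

/-- Pointwise expansion of the squared norm of a difference of complex numbers. -/
lemma norm_sub_sq_complex (z w : ℂ) :
    ‖z - w‖ ^ 2 = ‖z‖ ^ 2 - 2 * ((starRingEnd ℂ z) * w).re + ‖w‖ ^ 2 := by
  have h : ∀ u : ℂ, ‖u‖ ^ 2 = Complex.normSq u := fun u => by
    rw [Complex.sq_norm]
  simp only [h, Complex.normSq_apply, Complex.sub_re, Complex.sub_im, Complex.mul_re,
    Complex.mul_im, Complex.conj_re, Complex.conj_im]
  ring

/-- Per-path residual interference variance after parallel interference cancellation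
(equation (19) of the paper): if `X` (playing the role of the channel estimation error
`δa`) is independent of `(b, χ)` with `E[X] = 2 P_e a` and `E[|X|²] = Δ + 4 P_e² |a|²`, and
`δb = 2 b χ` is the decision feedback error, then
`E[|X b + a δb − X δb|²] = Δ + 4 P_e (1 − P_e) |a|²`. -/
theorem stmt_4 {Ω : Type*} [MeasurableSpace Ω] (μ : Measure Ω) [IsProbabilityMeasure μ]
    (Pe : ℝ) (hPe : Pe ∈ Set.Icc (0:ℝ) 1)
    (b χ : Ω → ℝ) (hb : Measurable b) (hχ : Measurable χ)
    (hbdist : μ (b ⁻¹' {1}) = ENNReal.ofReal (1/2) ∧ μ (b ⁻¹' {-1}) = ENNReal.ofReal (1/2))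
    (hχdist : μ (χ ⁻¹' {1}) = ENNReal.ofReal Pe ∧ μ (χ ⁻¹' {0}) = ENNReal.ofReal (1 - Pe))
    (hbχ : IndepFun b χ μ)
    (a : ℂ) (Δ : ℝ) (hΔ : 0 ≤ Δ)
    (X : Ω → ℂ) (hX : MemLp X 2 μ)
    (hXindep : IndepFun (fun ω => (b ω, χ ω)) X μ)
    (hXmean : (∫ ω, X ω ∂μ) = 2 * Pe * a)
    (hXsecond : (∫ ω, ‖X ω‖ ^ 2 ∂μ) = Δ + 4 * Pe ^ 2 * ‖a‖ ^ 2) :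
    (∫ ω, ‖X ω * (b ω : ℂ) + a * ((2 * b ω * χ ω : ℝ) : ℂ)
        - X ω * ((2 * b ω * χ ω : ℝ) : ℂ)‖ ^ 2 ∂μ)
      = Δ + 4 * Pe * (1 - Pe) * ‖a‖ ^ 2 := by
  obtain ⟨hPe0, hPe1⟩ := hPe
  obtain ⟨hb1, hbm1⟩ := hbdist
  obtain ⟨hχ1, hχ0⟩ := hχdist
  -- a.e. b ∈ {1, -1}
  have hbae : ∀ᵐ ω ∂μ, b ω = 1 ∨ b ω = -1 := by
    have hm1 : MeasurableSet (b ⁻¹' {1}) := hb (measurableSet_singleton 1)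
    have hm2 : MeasurableSet (b ⁻¹' {-1}) := hb (measurableSet_singleton (-1))
    have hdisj : Disjoint (b ⁻¹' {1}) (b ⁻¹' {-1}) := by
      rw [Set.disjoint_left]
      rintro ω h1 h2
      simp only [Set.mem_preimage, Set.mem_singleton_iff] at h1 h2
      rw [h1] at h2; norm_num at h2
    have hμS : μ (b ⁻¹' {1} ∪ b ⁻¹' {-1}) = 1 := by
      rw [measure_union hdisj hm2, hb1, hbm1,
        ← ENNReal.ofReal_add (by norm_num) (by norm_num)]
      norm_num
    have h0 : μ {ω | ¬ (b ω = 1 ∨ b ω = -1)} = 0 := by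
      have hset : {ω | ¬ (b ω = 1 ∨ b ω = -1)} = (b ⁻¹' {1} ∪ b ⁻¹' {-1})ᶜ := by
        ext ω; simp [Set.mem_preimage]
      rw [hset, measure_compl (hm1.union hm2) (measure_ne_top μ _), hμS, measure_univ,
        tsub_self]
    exact ae_iff.mpr h0
  -- a.e. χ ∈ {1, 0}
  have hχae : ∀ᵐ ω ∂μ, χ ω = 1 ∨ χ ω = 0 := by
    have hm1 : MeasurableSet (χ ⁻¹' {1}) := hχ (measurableSet_singleton 1)
    have hm2 : MeasurableSet (χ ⁻¹' {0}) := hχ (measurableSet_singleton 0)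
    have hdisj : Disjoint (χ ⁻¹' {1}) (χ ⁻¹' {0}) := by
      rw [Set.disjoint_left]
      rintro ω h1 h2
      simp only [Set.mem_preimage, Set.mem_singleton_iff] at h1 h2
      rw [h1] at h2; norm_num at h2
    have hμS : μ (χ ⁻¹' {1} ∪ χ ⁻¹' {0}) = 1 := by
      rw [measure_union hdisj hm2, hχ1, hχ0,
        ← ENNReal.ofReal_add hPe0 (by linarith)]
      norm_num
    have h0 : μ {ω | ¬ (χ ω = 1 ∨ χ ω = 0)} = 0 := by
      have hset : {ω | ¬ (χ ω = 1 ∨ χ ω = 0)} = (χ ⁻¹' {1} ∪ χ ⁻¹' {0})ᶜ := by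
        ext ω; simp [Set.mem_preimage]
      rw [hset, measure_compl (hm1.union hm2) (measure_ne_top μ _), hμS, measure_univ,
        tsub_self]
    exact ae_iff.mpr h0
  -- Integrability facts
  have hXsq : Integrable (fun ω => ‖X ω‖ ^ 2) μ := hX.norm.integrable_sq
  have hcX : MemLp (fun ω => 2 * a - X ω) 2 μ := (memLp_const (2 * a)).sub hX
  have hcXsq : Integrable (fun ω => ‖2 * a - X ω‖ ^ 2) μ := hcX.norm.integrable_sq
  have hXint : Integrable X μ := hX.integrable one_le_two
  have hχint : Integrable χ μ := by
    refine (integrable_const (1 : ℝ)).mono' hχ.aestronglyMeasurable ?_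
    filter_upwards [hχae] with ω h
    rcases h with h | h <;> simp [h]
  have hχval : (∫ ω, χ ω ∂μ) = Pe := by
    have heq : χ =ᵐ[μ] Set.indicator (χ ⁻¹' {1}) (fun _ => (1 : ℝ)) := by
      filter_upwards [hχae] with ω h
      rcases h with h | h <;> simp [Set.indicator_apply, Set.mem_preimage, h]
    rw [integral_congr_ae heq, integral_indicator (hχ (measurableSet_singleton 1))]
    simp [measureReal_def, hχ1, ENNReal.toReal_ofReal hPe0]
  -- a.e. rewrite of the integrand
  have hmain : (fun ω => ‖X ω * (b ω : ℂ) + a * ((2 * b ω * χ ω : ℝ) : ℂ)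
        - X ω * ((2 * b ω * χ ω : ℝ) : ℂ)‖ ^ 2)
      =ᵐ[μ] (fun ω => ‖X ω‖ ^ 2 * (1 - χ ω) + ‖2 * a - X ω‖ ^ 2 * χ ω) := by
    filter_upwards [hbae, hχae] with ω hbω hχω
    rcases hbω with hb' | hb' <;> rcases hχω with hc' | hc'
    · have e1 : X ω * (b ω : ℂ) + a * ((2 * b ω * χ ω : ℝ) : ℂ)
          - X ω * ((2 * b ω * χ ω : ℝ) : ℂ) = 2 * a - X ω := by
        rw [hb', hc']; push_cast; ring
      rw [e1, hc']; ring
    · have e1 : X ω * (b ω : ℂ) + a * ((2 * b ω * χ ω : ℝ) : ℂ)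
          - X ω * ((2 * b ω * χ ω : ℝ) : ℂ) = X ω := by
        rw [hb', hc']; push_cast; ring
      rw [e1, hc']; ring
    · have e1 : X ω * (b ω : ℂ) + a * ((2 * b ω * χ ω : ℝ) : ℂ)
          - X ω * ((2 * b ω * χ ω : ℝ) : ℂ) = -(2 * a - X ω) := by
        rw [hb', hc']; push_cast; ring
      rw [e1, norm_neg, hc']; ring
    · have e1 : X ω * (b ω : ℂ) + a * ((2 * b ω * χ ω : ℝ) : ℂ)
          - X ω * ((2 * b ω * χ ω : ℝ) : ℂ) = -(X ω) := by
        rw [hb', hc']; push_cast; ring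
      rw [e1, norm_neg, hc']; ring
  rw [integral_congr_ae hmain]
  -- integrability of the two products
  have hA : Integrable (fun ω => ‖X ω‖ ^ 2 * (1 - χ ω)) μ := by
    refine hXsq.mono'
      (hXsq.aestronglyMeasurable.mul (aestronglyMeasurable_const.sub
        hχ.aestronglyMeasurable)) ?_
    filter_upwards [hχae] with ω h
    rcases h with h | h <;>
      simp [h, Real.norm_eq_abs, abs_of_nonneg (sq_nonneg (‖X ω‖))]
  have hB : Integrable (fun ω => ‖2 * a - X ω‖ ^ 2 * χ ω) μ := by
    refine hcXsq.mono'
      (hcXsq.aestronglyMeasurable.mul hχ.aestronglyMeasurable) ?_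
    filter_upwards [hχae] with ω h
    rcases h with h | h <;>
      simp [h, Real.norm_eq_abs, abs_of_nonneg (sq_nonneg (‖2 * a - X ω‖))]
  rw [integral_add hA hB]
  -- independence of the transformed variables
  have hχint' : Integrable (fun ω => 1 - χ ω) μ := (integrable_const (1 : ℝ)).sub hχint
  have hind1 : IndepFun (fun ω => ‖X ω‖ ^ 2) (fun ω => 1 - χ ω) μ :=
    hXindep.symm.comp (measurable_norm.pow_const 2) (measurable_const.sub measurable_snd)
  have hind2 : IndepFun (fun ω => ‖2 * a - X ω‖ ^ 2) (fun ω => χ ω) μ :=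
    hXindep.symm.comp ((measurable_const.sub measurable_id).norm.pow_const 2) measurable_snd
  have e1 : (∫ ω, ‖X ω‖ ^ 2 * (1 - χ ω) ∂μ)
      = (Δ + 4 * Pe ^ 2 * ‖a‖ ^ 2) * (1 - Pe) := by
    have hmul : (∫ ω, ‖X ω‖ ^ 2 * (1 - χ ω) ∂μ)
        = (∫ ω, ‖X ω‖ ^ 2 ∂μ) * ∫ ω, (1 - χ ω) ∂μ :=
      hind1.integral_fun_mul_eq_mul_integral hXsq.aestronglyMeasurable hχint'.aestronglyMeasurable
    rw [hmul, hXsecond, integral_sub (integrable_const 1) hχint, hχval]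
    simp
  have hsub : (∫ ω, ‖2 * a - X ω‖ ^ 2 ∂μ)
      = 4 * ‖a‖ ^ 2 - 8 * Pe * ‖a‖ ^ 2 + (Δ + 4 * Pe ^ 2 * ‖a‖ ^ 2) := by
    have hpt : (fun ω => ‖2 * a - X ω‖ ^ 2)
        = fun ω => ‖(2 : ℂ) * a‖ ^ 2
            - 2 * ((starRingEnd ℂ (2 * a)) * X ω).re + ‖X ω‖ ^ 2 :=
      funext fun ω => norm_sub_sq_complex _ _
    have hre : Integrable (fun ω => ((starRingEnd ℂ (2 * a)) * X ω).re) μ :=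
      (hXint.const_mul _).re
    have hi1 : Integrable
        (fun ω => ‖(2:ℂ) * a‖ ^ 2 - 2 * ((starRingEnd ℂ) (2 * a) * X ω).re) μ :=
      (integrable_const _).sub (hre.const_mul 2)
    have hi2 : Integrable (fun _ : Ω => ‖(2:ℂ) * a‖ ^ 2) μ := integrable_const _
    have hi3 : Integrable (fun ω => 2 * ((starRingEnd ℂ) (2 * a) * X ω).re) μ :=
      hre.const_mul 2
    rw [hpt, integral_add hi1 hXsq, integral_sub hi2 hi3, integral_const,
      integral_const_mul, hXsecond]
    have hrei : (∫ ω, ((starRingEnd ℂ (2 * a)) * X ω).re ∂μ) = 4 * Pe * ‖a‖ ^ 2 := by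
      have h1 : (∫ ω, (starRingEnd ℂ (2 * a)) * X ω ∂μ)
          = (starRingEnd ℂ (2 * a)) * (2 * Pe * a) := by
        rw [integral_const_mul, hXmean]
      have h2 : (∫ ω, ((starRingEnd ℂ) (2 * a) * X ω).re ∂μ)
          = (∫ ω, (starRingEnd ℂ) (2 * a) * X ω ∂μ).re :=
        integral_re (hXint.const_mul (starRingEnd ℂ (2 * a)))
      rw [h2, h1]
      have hnorm : ‖a‖ ^ 2 = a.re * a.re + a.im * a.im := by
        rw [Complex.sq_norm, Complex.normSq_apply]
      simp only [Complex.mul_re, Complex.mul_im, Complex.conj_re, Complex.conj_im,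
        Complex.ofReal_re, Complex.ofReal_im, Complex.mul_im, hnorm]
      push_cast
      simp [Complex.mul_re, Complex.mul_im]
      ring
    rw [hrei]
    have hc2 : ‖(2 : ℂ) * a‖ ^ 2 = 4 * ‖a‖ ^ 2 := by
      rw [norm_mul]
      norm_num
      ring
    rw [hc2]
    simp
    ring
  have e2 : (∫ ω, ‖2 * a - X ω‖ ^ 2 * χ ω ∂μ)
      = (4 * ‖a‖ ^ 2 - 8 * Pe * ‖a‖ ^ 2 + (Δ + 4 * Pe ^ 2 * ‖a‖ ^ 2)) * Pe := by
    have hmul : (∫ ω, ‖2 * a - X ω‖ ^ 2 * χ ω ∂μ)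
        = (∫ ω, ‖2 * a - X ω‖ ^ 2 ∂μ) * ∫ ω, χ ω ∂μ :=
      hind2.integral_fun_mul_eq_mul_integral hcXsq.aestronglyMeasurable hχint.aestronglyMeasurable
    rw [hmul, hsub, hχval]
  rw [e1, e2]
  ring
end

section
/- Fix N, K, L ∈ ℕ and P_e ∈ [0,1]. For i ∈ {1,…,KL} let u(i) = ⌈i/L⌉ be the user index of i. For each symbol period m ≥ 1 and each i ∈ {1,…,KL}, let s_i(m) ∈ ℝ^N be a deterministic unit vector, and assume the time-average orthonormality condition: for all i, j, (1/M)·Σ_{m=1}^M s_i(m)ᵀs_j(m) → δ_{ij} as M → ∞. Let {b_k(m) : 1 ≤ k ≤ K, m ≥ 1} be i.i.d. random variables uniform on {−1,+1} and let {χ_k(m)} be i.i.d. Bernoulli(P_e) random variables independent of the b's; set b̂_k(m) = b_k(m)·(1 − 2χ_k(m)). Let a ∈ ℂ^{KL}. For each M, let S(M) be the (NM)×(KL) matrix whose i-th column is the stack of the vectors b_{u(i)}(m)·s_i(m) for m = 1,…,M, let Ŝ(M) be defined identically with b̂ in place of b, let δS(M) = S(M) − Ŝ(M), and define δa_f(M)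 = −(1/M)·Ŝ(M)ᵀ·δS(M)·a. Then E[δa_f(M)] → 2·P_e·a as M → ∞. -/
open MeasureTheory ProbabilityTheory Filter Matrix


lemma ae_two {Ω : Type*} [MeasurableSpace Ω] (μ : Measure Ω) [IsProbabilityMeasure μ]
    (f : Ω → ℝ) (hf : Measurable f) (x y : ℝ) (hxy : x ≠ y)
    (h : μ (f ⁻¹' {x}) + μ (f ⁻¹' {y}) = 1) :
    ∀ᵐ ω ∂μ, f ω = x ∨ f ω = y := by
  have hd : Disjoint (f ⁻¹' {x}) (f ⁻¹' {y}) := by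
    rw [Set.disjoint_left]
    rintro ω hx hy
    exact hxy (by rw [← hx, ← hy] : x = y) |>.elim
  have hmeas : MeasurableSet (f ⁻¹' {y}) := hf (measurableSet_singleton y)
  have hU : μ (f ⁻¹' {x} ∪ f ⁻¹' {y}) = 1 := by
    rw [measure_union hd hmeas, h]
  have : μ (f ⁻¹' {x} ∪ f ⁻¹' {y})ᶜ = 0 := by
    rw [prob_compl_eq_zero_iff ((hf (measurableSet_singleton x)).union hmeas)]
    exact hU
  rw [ae_iff]
  have hset : {ω | ¬(f ω = x ∨ f ω = y)} = (f ⁻¹' {x} ∪ f ⁻¹' {y})ᶜ := by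
    ext ω; simp [not_or]
  rw [hset]; exact this

lemma integral_ind {Ω : Type*} [MeasurableSpace Ω] (μ : Measure Ω) [IsProbabilityMeasure μ]
    (f : Ω → ℝ) (hf : Measurable f) (p : ℝ) (hp : 0 ≤ p)
    (hae : ∀ᵐ ω ∂μ, f ω = 1 ∨ f ω = 0) (h1 : μ (f ⁻¹' {1}) = ENNReal.ofReal p) :
    ∫ ω, f ω ∂μ = p := by
  have hcong : f =ᵐ[μ] (f ⁻¹' {1}).indicator (fun _ => (1:ℝ)) := by
    filter_upwards [hae] with ω h
    rcases h with h | h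
    · simp [Set.indicator_of_mem, Set.mem_preimage, h]
    · rw [h, Set.indicator_of_notMem]
      simp [Set.mem_preimage, h]
  rw [integral_congr_ae hcong, integral_indicator (hf (measurableSet_singleton 1)),
    setIntegral_const, measureReal_def, h1, smul_eq_mul, mul_one, ENNReal.toReal_ofReal hp]

lemma integral_pm {Ω : Type*} [MeasurableSpace Ω] (μ : Measure Ω) [IsProbabilityMeasure μ]
    (f : Ω → ℝ) (hf : Measurable f)
    (hae : ∀ᵐ ω ∂μ, f ω = 1 ∨ f ω = -1) (h1 : μ (f ⁻¹' {1}) = ENNReal.ofReal (1/2))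
    (h2 : μ (f ⁻¹' {-1}) = ENNReal.ofReal (1/2)) :
    ∫ ω, f ω ∂μ = 0 := by
  have hcong : f =ᵐ[μ] fun ω => (f ⁻¹' {1}).indicator (fun _ => (1:ℝ)) ω
      - (f ⁻¹' {-1}).indicator (fun _ => (1:ℝ)) ω := by
    filter_upwards [hae] with ω h
    rcases h with h | h
    · rw [Set.indicator_of_mem (by simp [Set.mem_preimage, h]),
        Set.indicator_of_notMem (by simp [Set.mem_preimage, h]; norm_num)]
      simp [h]
    · rw [Set.indicator_of_notMem (by simp [Set.mem_preimage, h]; norm_num),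
        Set.indicator_of_mem (by simp [Set.mem_preimage, h])]
      simp [h]
  have hi1 : Integrable ((f ⁻¹' {1}).indicator (fun _ => (1:ℝ))) μ :=
    (integrable_const (1:ℝ)).indicator (hf (measurableSet_singleton 1))
  have hi2 : Integrable ((f ⁻¹' {-1}).indicator (fun _ => (1:ℝ))) μ :=
    (integrable_const (1:ℝ)).indicator (hf (measurableSet_singleton (-1)))
  rw [integral_congr_ae hcong, integral_sub hi1 hi2,
    integral_indicator (hf (measurableSet_singleton 1)),
    integral_indicator (hf (measurableSet_singleton (-1))),
    setIntegral_const, setIntegral_const, measureReal_def, measureReal_def, h1, h2]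
  simp

lemma integrable_bdd {Ω : Type*} [MeasurableSpace Ω] (μ : Measure Ω) [IsProbabilityMeasure μ]
    (f : Ω → ℝ) (C : ℝ) (hm : Measurable f) (hb : ∀ᵐ ω ∂μ, |f ω| ≤ C) : Integrable f μ :=
  ⟨hm.aestronglyMeasurable, HasFiniteIntegral.of_bounded (by simpa [Real.norm_eq_abs] using hb)⟩

lemma EZ_lemma {Ω : Type*} [MeasurableSpace Ω] (μ : Measure Ω) [IsProbabilityMeasure μ] {K : ℕ}
    (Pe : ℝ) (b χ : Fin K → ℕ → Ω → ℝ)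
    (hbmeas : ∀ k m, Measurable (b k m)) (hχmeas : ∀ k m, Measurable (χ k m))
    (hb_ae : ∀ k m, ∀ᵐ ω ∂μ, b k m ω = 1 ∨ b k m ω = -1)
    (hχ_ae : ∀ k m, ∀ᵐ ω ∂μ, χ k m ω = 1 ∨ χ k m ω = 0)
    (hEb : ∀ k m, ∫ ω, b k m ω ∂μ = 0)
    (hEχ : ∀ k m, ∫ ω, χ k m ω ∂μ = Pe)
    (hindep : iIndepFun
      (Sum.elim (fun q : Fin K × ℕ => b q.1 q.2) (fun q : Fin K × ℕ => χ q.1 q.2)) μ)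
    (k l : Fin K) (m : ℕ) :
    ∫ ω, (b k m ω * (1 - 2 * χ k m ω)) * (b l m ω * (2 * χ l m ω)) ∂μ
      = if k = l then -2 * Pe else 0 := by
  set F := Sum.elim (fun q : Fin K × ℕ => b q.1 q.2) (fun q : Fin K × ℕ => χ q.1 q.2) with hF
  have hFmeas : ∀ q, Measurable (F q) := by
    rintro (⟨k', m'⟩ | ⟨k', m'⟩)
    · exact hbmeas k' m'
    · exact hχmeas k' m'
  by_cases hkl : k = l
  · subst hkl
    rw [if_pos rfl]
    have hcong : (fun ω => (b k m ω * (1 - 2 * χ k m ω)) * (b k m ω * (2 * χ k m ω)))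
        =ᵐ[μ] fun ω => (-2) * χ k m ω := by
      filter_upwards [hb_ae k m, hχ_ae k m] with ω h1 h2
      rcases h1 with h1 | h1 <;> rcases h2 with h2 | h2 <;> rw [h1, h2] <;> ring
    rw [integral_congr_ae hcong, integral_const_mul, hEχ]

  · rw [if_neg hkl]
    -- independence of X = b k m * (1 - 2 χ k m) and Y = b l m * (2 χ l m)
    set X : Ω → ℝ := fun ω => b k m ω * (1 - 2 * χ k m ω) with hX
    set Y : Ω → ℝ := fun ω => b l m ω * (2 * χ l m ω) with hY
    have hSfin : (({Sum.inl (k, m), Sum.inr (k, m)} : Finset ((Fin K × ℕ) ⊕ (Fin K × ℕ)))) ≠ ∅ := by simp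
    have hdisj : Disjoint ({Sum.inl (k, m), Sum.inr (k, m)} :
          Finset ((Fin K × ℕ) ⊕ (Fin K × ℕ)))
        ({Sum.inl (l, m), Sum.inr (l, m)} : Finset ((Fin K × ℕ) ⊕ (Fin K × ℕ))) := by
      rw [Finset.disjoint_left]
      rintro x hx hx'
      simp only [Finset.mem_insert, Finset.mem_singleton] at hx hx'
      rcases hx with rfl | rfl <;> rcases hx' with h | h <;> simp_all
    have hbase := hindep.indepFun_finset _ _ hdisj hFmeas
    have hmem1 : (Sum.inl (k, m) : (Fin K × ℕ) ⊕ (Fin K × ℕ)) ∈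
        ({Sum.inl (k, m), Sum.inr (k, m)} : Finset _) := by simp
    have hmem2 : (Sum.inr (k, m) : (Fin K × ℕ) ⊕ (Fin K × ℕ)) ∈
        ({Sum.inl (k, m), Sum.inr (k, m)} : Finset _) := by simp
    have hmem3 : (Sum.inl (l, m) : (Fin K × ℕ) ⊕ (Fin K × ℕ)) ∈
        ({Sum.inl (l, m), Sum.inr (l, m)} : Finset _) := by simp
    have hmem4 : (Sum.inr (l, m) : (Fin K × ℕ) ⊕ (Fin K × ℕ)) ∈
        ({Sum.inl (l, m), Sum.inr (l, m)} : Finset _) := by simp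
    have hφ : Measurable (fun g : (({Sum.inl (k, m), Sum.inr (k, m)} :
          Finset ((Fin K × ℕ) ⊕ (Fin K × ℕ))) : Type _) → ℝ =>
        g ⟨_, hmem1⟩ * (1 - 2 * g ⟨_, hmem2⟩)) := by
      exact (measurable_pi_apply _).mul
        (measurable_const.sub ((measurable_pi_apply _).const_mul 2))
    have hψ : Measurable (fun g : (({Sum.inl (l, m), Sum.inr (l, m)} :
          Finset ((Fin K × ℕ) ⊕ (Fin K × ℕ))) : Type _) → ℝ =>
        g ⟨_, hmem3⟩ * (2 * g ⟨_, hmem4⟩)) := by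
      exact (measurable_pi_apply _).mul ((measurable_pi_apply _).const_mul 2)
    have hXY : IndepFun X Y μ := hbase.comp hφ hψ
    -- integrability
    have hbint : ∀ k' m', Integrable (b k' m') μ :=
      fun k' m' => integrable_bdd μ _ 1 (hbmeas k' m') (by
        filter_upwards [hb_ae k' m'] with ω h; rcases h with h | h <;> rw [h] <;> norm_num)
    have hone : ∀ k' m', Integrable (fun ω => 1 - 2 * χ k' m' ω) μ :=
      fun k' m' => integrable_bdd μ _ 3 ((measurable_const.sub ((hχmeas k' m').const_mul 2)))
        (by filter_upwards [hχ_ae k' m'] with ω h; rcases h with h | h <;> rw [h] <;> norm_num)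
    have htwo : ∀ k' m', Integrable (fun ω => 2 * χ k' m' ω) μ :=
      fun k' m' => integrable_bdd μ _ 2 ((hχmeas k' m').const_mul 2)
        (by filter_upwards [hχ_ae k' m'] with ω h; rcases h with h | h <;> rw [h] <;> norm_num)
    have hXint : Integrable X μ := by
      refine integrable_bdd μ _ 3 ((hbmeas k m).mul
        (measurable_const.sub ((hχmeas k m).const_mul 2))) ?_
      filter_upwards [hb_ae k m, hχ_ae k m] with ω h1 h2
      rcases h1 with h1 | h1 <;> rcases h2 with h2 | h2 <;> rw [hX] <;> simp only [] <;>
        rw [h1, h2] <;> norm_num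
    have hYint : Integrable Y μ := by
      refine integrable_bdd μ _ 2 ((hbmeas l m).mul (((hχmeas l m).const_mul 2))) ?_
      filter_upwards [hb_ae l m, hχ_ae l m] with ω h1 h2
      rcases h1 with h1 | h1 <;> rcases h2 with h2 | h2 <;> rw [hY] <;> simp only [] <;>
        rw [h1, h2] <;> norm_num
    have hmain : ∫ ω, X ω * Y ω ∂μ = (∫ ω, X ω ∂μ) * ∫ ω, Y ω ∂μ :=
      IndepFun.integral_fun_mul_eq_mul_integral hXY hXint.aestronglyMeasurable hYint.aestronglyMeasurable
    -- E X = 0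
    have hbx : IndepFun (b k m) (fun ω => 1 - 2 * χ k m ω) μ := by
      have h1 : IndepFun (F (Sum.inl (k, m))) (F (Sum.inr (k, m))) μ :=
        hindep.indepFun (by simp)
      exact h1.comp measurable_id (measurable_const.sub (measurable_id.const_mul 2))
    have hEX : ∫ ω, X ω ∂μ = 0 := by
      have := IndepFun.integral_fun_mul_eq_mul_integral hbx (hbint k m).aestronglyMeasurable (hone k m).aestronglyMeasurable
      rw [hX]
      simpa [hEb k m] using this
    rw [hmain, hEX, zero_mul]

lemma int_aux {Ω : Type*} [MeasurableSpace Ω] (μ : Measure Ω) (g : Ω → ℝ) (z : ℂ) :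
    ∫ ω, ((g ω : ℝ) : ℂ) * z ∂μ = ((∫ ω, g ω ∂μ : ℝ) : ℂ) * z := by
  rw [integral_mul_const]
  congr 1
  exact integral_ofReal (𝕜 := ℂ) (f := g)

/-- The paper's Lemma 2: the channel estimation error component
`δa_f = −(1/M) Ŝᵀ δS a` caused by hard decision-feedback errors is asymptotically biased,
with `E[δa_f] → 2 P_e a` as the coherence time `M → ∞`. Here `S(M)` stacks the spreading
codes multiplied by the true BPSK symbols `b`, `Ŝ(M)` is the same with the decision
feedbacks `b̂ = b(1 − 2χ)`, the error indicators `χ` are Bernoulli(`P_e`) and the whole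
family `{b, χ}` is independent. -/
theorem stmt_7 {Ω : Type*} [MeasurableSpace Ω] (μ : Measure Ω) [IsProbabilityMeasure μ]
    (N K L : ℕ) (hN : 0 < N) (hK : 0 < K) (hL : 0 < L)
    (Pe : ℝ) (hPe : Pe ∈ Set.Icc (0:ℝ) 1)
    (u : Fin (K * L) → Fin K) (hu : ∀ i, (u i : ℕ) = (i : ℕ) / L)
    (s : Fin (K * L) → ℕ → Fin N → ℝ)
    (hunit : ∀ i m, 1 ≤ m → ∑ n, s i m n ^ 2 = 1)
    (horth : ∀ i j, Tendsto (fun M : ℕ =>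
        (1 / (M : ℝ)) * ∑ m ∈ Finset.Icc 1 M, ∑ n, s i m n * s j m n)
      atTop (nhds (if i = j then (1:ℝ) else 0)))
    (b χ : Fin K → ℕ → Ω → ℝ)
    (hbmeas : ∀ k m, Measurable (b k m)) (hχmeas : ∀ k m, Measurable (χ k m))
    (hbdist : ∀ k m, μ (b k m ⁻¹' {1}) = ENNReal.ofReal (1/2)
      ∧ μ (b k m ⁻¹' {-1}) = ENNReal.ofReal (1/2))
    (hχdist : ∀ k m, μ (χ k m ⁻¹' {1}) = ENNReal.ofReal Pe
      ∧ μ (χ k m ⁻¹' {0}) = ENNReal.ofReal (1 - Pe))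
    (hindep : iIndepFun
      (Sum.elim (fun q : Fin K × ℕ => b q.1 q.2) (fun q : Fin K × ℕ => χ q.1 q.2)) μ)
    (a : Fin (K * L) → ℂ)
    (S Shat : (M : ℕ) → Ω → Matrix (Fin M × Fin N) (Fin (K * L)) ℝ)
    (hS : ∀ M ω p i, S M ω p i = b (u i) (p.1.val + 1) ω * s i (p.1.val + 1) p.2)
    (hShat : ∀ M ω p i, Shat M ω p i
      = b (u i) (p.1.val + 1) ω * (1 - 2 * χ (u i) (p.1.val + 1) ω) * s i (p.1.val + 1) p.2)
    (δaf : (M : ℕ) → Ω → Fin (K * L) → ℂ)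
    (hδaf : ∀ M ω, δaf M ω = (-(1 / (M : ℝ))) •
      ((((Shat M ω)ᵀ * (S M ω - Shat M ω)).map (fun x => (x : ℂ))).mulVec a)) :
    ∀ i, Tendsto (fun M : ℕ => ∫ ω, δaf M ω i ∂μ) atTop (nhds (2 * Pe * a i)) := by
  obtain ⟨hPe0, hPe1⟩ := hPe
  -- almost-sure range facts
  have hb_ae : ∀ k m, ∀ᵐ ω ∂μ, b k m ω = 1 ∨ b k m ω = -1 := by
    intro k m
    refine ae_two μ _ (hbmeas k m) 1 (-1) (by norm_num) ?_
    rw [(hbdist k m).1, (hbdist k m).2, ← ENNReal.ofReal_add (by norm_num) (by norm_num)]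
    norm_num
  have hχ_ae : ∀ k m, ∀ᵐ ω ∂μ, χ k m ω = 1 ∨ χ k m ω = 0 := by
    intro k m
    refine ae_two μ _ (hχmeas k m) 1 0 (by norm_num) ?_
    rw [(hχdist k m).1, (hχdist k m).2,
      ← ENNReal.ofReal_add hPe0 (by linarith)]
    norm_num
  -- expectations
  have hEb : ∀ k m, ∫ ω, b k m ω ∂μ = 0 := fun k m =>
    integral_pm μ _ (hbmeas k m) (hb_ae k m) (hbdist k m).1 (hbdist k m).2
  have hEχ : ∀ k m, ∫ ω, χ k m ω ∂μ = Pe := fun k m =>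
    integral_ind μ _ (hχmeas k m) Pe hPe0 (hχ_ae k m) (hχdist k m).1
  have hEZ := EZ_lemma μ Pe b χ hbmeas hχmeas hb_ae hχ_ae hEb hEχ hindep
  -- integrability of the core product
  have hZmeas : ∀ (k l : Fin K) (m : ℕ), Measurable (fun ω =>
      (b k m ω * (1 - 2 * χ k m ω)) * (b l m ω * (2 * χ l m ω))) := fun k l m =>
    ((hbmeas k m).mul (measurable_const.sub ((hχmeas k m).const_mul 2))).mul
      ((hbmeas l m).mul ((hχmeas l m).const_mul 2))
  have hZint : ∀ (k l : Fin K) (m : ℕ), Integrable (fun ω =>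
      (b k m ω * (1 - 2 * χ k m ω)) * (b l m ω * (2 * χ l m ω))) μ := by
    intro k l m
    refine integrable_bdd μ _ 6 (hZmeas k l m) ?_
    filter_upwards [hb_ae k m, hχ_ae k m, hb_ae l m, hχ_ae l m] with ω h1 h2 h3 h4
    rcases h1 with h1 | h1 <;> rcases h2 with h2 | h2 <;> rcases h3 with h3 | h3 <;>
      rcases h4 with h4 | h4 <;> rw [h1, h2, h3, h4] <;> norm_num
  intro i
  -- the exact value of the mean for each M
  have key : ∀ M : ℕ, ∫ ω, δaf M ω i ∂μ =
      ∑ j, (if u i = u j then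
        ((2 * Pe * ((1 / (M : ℝ)) * ∑ m ∈ Finset.Icc 1 M, ∑ n, s i m n * s j m n) : ℝ) : ℂ)
        else 0) * a j := by
    intro M
    have hentry : ∀ (ω : Ω) (p : Fin M × Fin N) (j : Fin (K * L)),
        Shat M ω p i * (S M ω p j - Shat M ω p j) =
          s i (p.1.val + 1) p.2 * s j (p.1.val + 1) p.2 *
            ((b (u i) (p.1.val + 1) ω * (1 - 2 * χ (u i) (p.1.val + 1) ω)) *
              (b (u j) (p.1.val + 1) ω * (2 * χ (u j) (p.1.val + 1) ω))) := by
      intro ω p j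
      rw [hS, hShat, hShat]
      ring
    have hpt : ∀ ω, δaf M ω i = ∑ j, ∑ p : Fin M × Fin N,
        ((-(1 / (M : ℝ)) * (s i (p.1.val + 1) p.2 * s j (p.1.val + 1) p.2) *
          ((b (u i) (p.1.val + 1) ω * (1 - 2 * χ (u i) (p.1.val + 1) ω)) *
            (b (u j) (p.1.val + 1) ω * (2 * χ (u j) (p.1.val + 1) ω))) : ℝ) : ℂ) * a j := by
      intro ω
      rw [hδaf]
      simp only [Pi.smul_apply, Matrix.mulVec, dotProduct, Matrix.map_apply,
        Matrix.mul_apply, Matrix.sub_apply, Matrix.transpose_apply, Complex.real_smul,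
        hentry ω, Complex.ofReal_sum, Finset.mul_sum, Finset.sum_mul]
      refine Finset.sum_congr rfl fun j _ => Finset.sum_congr rfl fun p _ => ?_
      push_cast
      ring
    have hint : ∀ (j : Fin (K * L)) (p : Fin M × Fin N), Integrable (fun ω =>
        ((-(1 / (M : ℝ)) * (s i (p.1.val + 1) p.2 * s j (p.1.val + 1) p.2) *
          ((b (u i) (p.1.val + 1) ω * (1 - 2 * χ (u i) (p.1.val + 1) ω)) *
            (b (u j) (p.1.val + 1) ω * (2 * χ (u j) (p.1.val + 1) ω))) : ℝ) : ℂ) * a j) μ := by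
      intro j p
      exact (((hZint (u i) (u j) (p.1.val + 1)).const_mul _).ofReal).mul_const (a j)
    simp only [hpt]
    rw [integral_finset_sum _ (fun j _ => integrable_finset_sum _ (fun p _ => hint j p))]
    refine Finset.sum_congr rfl fun j _ => ?_
    rw [integral_finset_sum _ (fun p _ => hint j p)]
    have hip : ∀ p : Fin M × Fin N, (∫ ω,
        ((-(1 / (M : ℝ)) * (s i (p.1.val + 1) p.2 * s j (p.1.val + 1) p.2) *
          ((b (u i) (p.1.val + 1) ω * (1 - 2 * χ (u i) (p.1.val + 1) ω)) *
            (b (u j) (p.1.val + 1) ω * (2 * χ (u j) (p.1.val + 1) ω))) : ℝ) : ℂ) * a j ∂μ)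
        = ((-(1 / (M : ℝ)) * (s i (p.1.val + 1) p.2 * s j (p.1.val + 1) p.2) *
            (if u i = u j then -2 * Pe else 0) : ℝ) : ℂ) * a j := by
      intro p
      rw [int_aux, integral_const_mul, hEZ]
    simp only [hip]
    rw [← Finset.sum_mul, ← Complex.ofReal_sum]
    have hre : (∑ p : Fin M × Fin N, s i (p.1.val + 1) p.2 * s j (p.1.val + 1) p.2)
        = ∑ m ∈ Finset.Icc 1 M, ∑ n, s i m n * s j m n := by
      rw [Fintype.sum_prod_type, ← Finset.Ico_add_one_right_eq_Icc, Finset.sum_Ico_eq_sum_range,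
        Nat.add_sub_cancel,
        Fin.sum_univ_eq_sum_range (fun m => ∑ n : Fin N, s i (m + 1) n * s j (m + 1) n) M]
      exact Finset.sum_congr rfl fun x _ => by rw [add_comm 1 x]
    by_cases huj : u i = u j
    · simp only [if_pos huj]
      have hr : (∑ p : Fin M × Fin N, -(1 / (M : ℝ)) *
            (s i (p.1.val + 1) p.2 * s j (p.1.val + 1) p.2) * (-2 * Pe))
          = 2 * Pe * ((1 / (M : ℝ)) * ∑ m ∈ Finset.Icc 1 M, ∑ n, s i m n * s j m n) := by
        calc (∑ p : Fin M × Fin N, -(1 / (M : ℝ)) *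
              (s i (p.1.val + 1) p.2 * s j (p.1.val + 1) p.2) * (-2 * Pe))
            = ∑ p : Fin M × Fin N, (2 * Pe * (1 / (M : ℝ))) *
              (s i (p.1.val + 1) p.2 * s j (p.1.val + 1) p.2) :=
            Finset.sum_congr rfl fun p _ => by ring
          _ = (2 * Pe * (1 / (M : ℝ))) * ∑ p : Fin M × Fin N,
              (s i (p.1.val + 1) p.2 * s j (p.1.val + 1) p.2) := by rw [Finset.mul_sum]
          _ = 2 * Pe * ((1 / (M : ℝ)) * ∑ m ∈ Finset.Icc 1 M, ∑ n, s i m n * s j m n) := by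
            rw [hre]; ring
      rw [hr]
    · simp [if_neg huj]
  -- take the limit
  simp only [key]
  have hlim : (2 * Pe * a i : ℂ) = ∑ j, (if u i = u j then
      ((2 * Pe * (if i = j then (1:ℝ) else 0) : ℝ) : ℂ) else 0) * a j := by
    rw [Finset.sum_eq_single i]
    · simp
    · intro j _ hj
      by_cases huj : u i = u j
      · simp [huj, Ne.symm hj]
      · simp [huj]
    · intro h
      exact absurd (Finset.mem_univ i) h
  rw [hlim]
  refine tendsto_finset_sum _ fun j _ => ?_
  by_cases huj : u i = u j
  · simp only [if_pos huj]
    refine Tendsto.mul_const (a j) ?_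
    refine (Complex.continuous_ofReal.tendsto _).comp ?_
    exact (horth i j).const_mul (2 * Pe)
  · simp only [if_neg huj]
    exact tendsto_const_nhds
end

section
/- Let β, L, M > 0 and define D₀(s) = s·(1 + βL/M + L·s/M) for s ≥ 0. Let g : ℝ → ℝ be differentiable at 0 with g(0) = 0 and g′(0) = 0, let D₁, P_e : [0,∞) → ℝ be differentiable at 0 with P_e(0) = 0 and P_e(s) ≥ 0, satisfying P_e(s) = g( D₀(s) + D₁(s)·P_e(s) ) for all s in a right neighborhood of 0. Then lim_{s→0⁺} s / ( D₀(s) + D₁(s)·P_e(s) ) = 1 / (1 + Lβ/M) = M/(M + Lβ). That is, the asymptotic multiuser efficiency of the iterative receiver equals 1/(1 + Lβ/M). -/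
/-!
The fixed-point relation `P_e = g(D₀ + D₁ P_e)` with a flat decoder function (`g(0) = g'(0) = 0`)
forces `P_e` to be flat at `0` as well, so `P_e(s) = o(s)`. The effective variance is then
`D₀(s) + D₁(s) P_e(s) = s (1 + βL/M) + o(s)`, and the ratio `s / (D₀ + D₁ P_e)` tends to
`1 / (1 + βL/M)`.
-/

open Filter Set Topology

theorem hasDerivWithinAt_zero_of_eventuallyEq_comp {f F g : ℝ → ℝ} {s : Set ℝ} {x F' : ℝ}
    (hg : HasDerivAt g 0 (F x)) (hF : HasDerivWithinAt F F' s x)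
    (hf : f =ᶠ[𝓝[s] x] g ∘ F) (hx : f x = g (F x)) : HasDerivWithinAt f 0 s x := by
  simpa using (hg.comp_hasDerivWithinAt x hF).congr_of_eventuallyEq hf hx

theorem tendsto_div_self_of_hasDerivWithinAt_Ici {f : ℝ → ℝ} {f' : ℝ}
    (hf : HasDerivWithinAt f f' (Ici 0) 0) (hf0 : f 0 = 0) :
    Tendsto (fun s => f s / s) (𝓝[>] 0) (𝓝 f') := by
  have hslope := (hasDerivWithinAt_iff_tendsto_slope' self_notMem_Ioi).1 hf.Ioi_of_Ici
  simpa [slope_fun_def_field, hf0] using hslope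

theorem hasDerivAt_mul_affine_zero (a b : ℝ) :
    HasDerivAt (fun s : ℝ => s * (a + b * s)) a 0 := by
  simpa using (hasDerivAt_id (0 : ℝ)).fun_mul (((hasDerivAt_id (0 : ℝ)).const_mul b).const_add a)

theorem stmt_13_general (β L M : ℝ) (hβ : 0 < β) (hL : 0 < L) (hM : 0 < M)
    (g : ℝ → ℝ) (hg0 : g 0 = 0) (hg' : HasDerivAt g 0 0)
    (D₁ Pe : ℝ → ℝ) (d₁ p : ℝ)
    (hD₁ : HasDerivWithinAt D₁ d₁ (Set.Ici 0) 0)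
    (hPe : HasDerivWithinAt Pe p (Set.Ici 0) 0)
    (hPe0 : Pe 0 = 0)
    (hfix : ∃ ε > 0, ∀ s : ℝ, 0 ≤ s → s < ε →
      Pe s = g (s * (1 + β * L / M + L * s / M) + D₁ s * Pe s)) :
    Tendsto (fun s => s / (s * (1 + β * L / M + L * s / M) + D₁ s * Pe s))
      (nhdsWithin 0 (Set.Ioi 0)) (nhds (1 / (1 + L * β / M)))
    ∧ 1 / (1 + L * β / M) = M / (M + L * β) := by
  obtain ⟨ε, hε, hfix⟩ := hfix
  set F : ℝ → ℝ := fun s => s * (1 + β * L / M + L * s / M) + D₁ s * Pe s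
  have hD₀ : HasDerivAt (fun s : ℝ => s * (1 + β * L / M + L * s / M)) (1 + β * L / M) 0 := by
    simpa [mul_div_right_comm L] using hasDerivAt_mul_affine_zero (1 + β * L / M) (L / M)
  have hF0 : F 0 = 0 := by simp [F, hPe0]
  have hPe_eq : Pe =ᶠ[𝓝[Ici 0] 0] g ∘ F := by
    filter_upwards [self_mem_nhdsWithin, nhdsWithin_le_nhds (Iio_mem_nhds hε)] with s hs0 hsε
    exact hfix s hs0 hsε
  have hPe_flat : HasDerivWithinAt Pe 0 (Ici 0) 0 :=
    hasDerivWithinAt_zero_of_eventuallyEq_comp (by simpa [hPe0] using hg')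
      (hD₀.hasDerivWithinAt.fun_add (hD₁.fun_mul hPe)) hPe_eq (by simp [hg0, hPe0])
  have hF : HasDerivWithinAt F (1 + β * L / M) (Ici 0) 0 := by
    simpa [hPe0] using hD₀.hasDerivWithinAt.fun_add (hD₁.fun_mul hPe_flat)
  have hlim := (tendsto_div_self_of_hasDerivWithinAt_Ici hF hF0).inv₀ (by positivity)
  refine ⟨?_, by field_simp⟩
  rw [one_div, mul_comm L β]
  exact hlim.congr fun s => inv_div _ _

/-- The asymptotic multiuser efficiency of the iterative receiver: with
`D₀(s) = s (1 + βL/M + Ls/M)` and the fixed point `P_e(s) = g(D₀(s) + D₁(s) P_e(s))`,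
`lim_{s→0⁺} s / (D₀(s) + D₁(s) P_e(s)) = 1/(1 + Lβ/M) = M/(M + Lβ)`. -/
theorem stmt_13 (β L M : ℝ) (hβ : 0 < β) (hL : 0 < L) (hM : 0 < M)
    (g : ℝ → ℝ) (hg0 : g 0 = 0) (hg' : HasDerivAt g 0 0)
    (D₁ Pe : ℝ → ℝ) (d₁ p : ℝ)
    (hD₁ : HasDerivWithinAt D₁ d₁ (Set.Ici 0) 0)
    (hPe : HasDerivWithinAt Pe p (Set.Ici 0) 0)
    (hPe0 : Pe 0 = 0) (hPenn : ∀ s : ℝ, 0 ≤ s → 0 ≤ Pe s)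
    (hfix : ∃ ε > 0, ∀ s : ℝ, 0 ≤ s → s < ε →
      Pe s = g (s * (1 + β * L / M + L * s / M) + D₁ s * Pe s)) :
    Tendsto (fun s => s / (s * (1 + β * L / M + L * s / M) + D₁ s * Pe s))
      (nhdsWithin 0 (Set.Ioi 0)) (nhds (1 / (1 + L * β / M)))
    ∧ 1 / (1 + L * β / M) = M / (M + L * β) :=
  stmt_13_general β L M hβ hL hM g hg0 hg' D₁ Pe d₁ p hD₁ hPe hPe0 hfix
end
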